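/- arXiv:1711.01365 — 8 statements merged into one kernel-verified Lean document; each statement's English description precedes it below -/
import Mathlib

section
/- Let n ≥ 1 and let A be an invertible real n×n matrix. Then AᵀA is positive definite, the matrix B* = A · ((AᵀA)^{1/2})⁻¹ (where (AᵀA)^{1/2} is the positive semidefinite square root of AᵀA) is orthogonal, and B* minimizes the Frobenius distance to A over all orthogonal matrices: for every B ∈ O(n), ‖B* − A‖_F ≤ ‖B − A‖_F. -/
/-! Write `S = (AᵀA)^{1/2}` and `U = A S⁻¹`; then `UᵀU = S⁻¹ (AᵀA) S⁻¹ = 1` and `A = U S`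
(polar decomposition). For orthogonal `B`, `‖B - A‖_F² = n + tr (AᵀA) - 2 tr (BᵀA)`, so the claim
is that `tr (BᵀA) = tr ((BᵀU) S)` is largest at `B = U`, where it equals `tr S`. This holds because
`tr (Q S) ≤ tr S` for every orthogonal `Q` and positive semidefinite `S`. -/

open Matrix

noncomputable def Matrix.PosSemidef.sqrt {n : Type*} [Fintype n] [DecidableEq n]
    {A : Matrix n n ℝ} (hA : A.PosSemidef) : Matrix n n ℝ :=
  (hA.1.eigenvectorUnitary : Matrix n n ℝ) * diagonal ((↑) ∘ (√·) ∘ hA.1.eigenvalues) *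
    (star hA.1.eigenvectorUnitary : Matrix n n ℝ)

noncomputable def frobNorm {n : ℕ} (A : Matrix (Fin n) (Fin n) ℝ) : ℝ :=
  Real.sqrt (Matrix.trace (Aᵀ * A))

open scoped MatrixOrder

namespace Matrix

variable {n : Type*}

theorem PosSemidef.transpose_eq {S : Matrix n n ℝ} (hS : S.PosSemidef) : Sᵀ = S := by
  simpa only [IsHermitian, conjTranspose_eq_transpose_of_trivial] using hS.isHermitian

variable [Fintype n] [DecidableEq n]

theorem PosSemidef.sqrt_eq_cfcSqrt {A : Matrix n n ℝ} (hA : A.PosSemidef) :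
    hA.sqrt = CFC.sqrt A := by
  rw [CFC.sqrt_eq_cfc, cfc_nnreal_eq_real _ A hA.nonneg, hA.1.cfc_eq]
  simp [PosSemidef.sqrt, IsHermitian.cfc, Unitary.conjStarAlgAut_apply, Function.comp_def,
    max_eq_left (hA.eigenvalues_nonneg _)]

theorem trace_mul_le_trace_of_orthogonal {Q S : Matrix n n ℝ} (hQ : Qᵀ * Q = 1)
    (hS : S.PosSemidef) : (Q * S).trace ≤ S.trace := by
  -- `(1 - Q) S (1 - Q)ᵀ` is positive semidefinite and its trace is `2 (tr S - tr (Q S))`.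
  have hnonneg := (hS.mul_mul_conjTranspose_same (1 - Q)).trace_nonneg
  have hQSQ : (Q * S * Qᵀ).trace = S.trace := by
    rw [trace_mul_comm, ← mul_assoc, hQ, one_mul]
  have hSQ : (S * Qᵀ).trace = (Q * S).trace := by
    rw [← trace_transpose, transpose_mul, transpose_transpose, hS.transpose_eq]
  simp only [conjTranspose_eq_transpose_of_trivial, transpose_sub, transpose_one, mul_sub,
    sub_mul, one_mul, mul_one, trace_sub, hQSQ, hSQ] at hnonneg
  linarith

theorem trace_transpose_sub_mul_sub_of_orthogonal {C A : Matrix n n ℝ} (hC : Cᵀ * C = 1) :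
    ((C - A)ᵀ * (C - A)).trace = Fintype.card n + (Aᵀ * A).trace - 2 * (Cᵀ * A).trace := by
  have hAC : (Aᵀ * C).trace = (Cᵀ * A).trace := by
    rw [← trace_transpose, transpose_mul, transpose_transpose]
  rw [transpose_sub, sub_mul, mul_sub, mul_sub, trace_sub, trace_sub, trace_sub, hC, hAC,
    trace_one]
  ring

theorem transpose_mul_self_mul_inv_eq_one {A S : Matrix n n ℝ}
    (hSt : Sᵀ = S) (hSS : S * S = Aᵀ * A) (hS : IsUnit S) : (A * S⁻¹)ᵀ * (A * S⁻¹) = 1 := by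
  have hSdet : IsUnit S.det := (isUnit_iff_isUnit_det S).mp hS
  calc (A * S⁻¹)ᵀ * (A * S⁻¹) = S⁻¹ * (Aᵀ * A) * S⁻¹ := by
        rw [transpose_mul, transpose_nonsing_inv, hSt, mul_assoc, mul_assoc, mul_assoc]
    _ = 1 := by rw [← hSS, ← mul_assoc, nonsing_inv_mul _ hSdet, one_mul, mul_nonsing_inv _ hSdet]

end Matrix

theorem frobNorm_sub_mul_le_of_orthogonal {n : ℕ} {U S B : Matrix (Fin n) (Fin n) ℝ}
    (hU : Uᵀ * U = 1) (hS : S.PosSemidef) (hB : Bᵀ * B = 1) :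
    frobNorm (U - U * S) ≤ frobNorm (B - U * S) := by
  have hBU : (Bᵀ * U)ᵀ * (Bᵀ * U) = 1 := by
    rw [transpose_mul, transpose_transpose, mul_assoc, ← mul_assoc B, mul_eq_one_comm.mp hB,
      one_mul, hU]
  have htrace : (Bᵀ * (U * S)).trace ≤ (Uᵀ * (U * S)).trace := by
    rw [← mul_assoc, ← mul_assoc, hU, one_mul]
    exact trace_mul_le_trace_of_orthogonal hBU hS
  unfold frobNorm
  rw [trace_transpose_sub_mul_sub_of_orthogonal hU, trace_transpose_sub_mul_sub_of_orthogonal hB]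
  exact Real.sqrt_le_sqrt (by linarith)

theorem orthogonal_projection_closest_general (n : ℕ)
    (A : Matrix (Fin n) (Fin n) ℝ) (hA : IsUnit A.det) :
    (Aᵀ * A).PosDef ∧
    (A * ((Matrix.posSemidef_conjTranspose_mul_self A).sqrt)⁻¹)ᵀ *
      (A * ((Matrix.posSemidef_conjTranspose_mul_self A).sqrt)⁻¹) = 1 ∧
    ∀ B : Matrix (Fin n) (Fin n) ℝ, Bᵀ * B = 1 →
      frobNorm (A * ((Matrix.posSemidef_conjTranspose_mul_self A).sqrt)⁻¹ - A) ≤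
        frobNorm (B - A) := by
  rw [PosSemidef.sqrt_eq_cfcSqrt, conjTranspose_eq_transpose_of_trivial]
  have hPD : (Aᵀ * A).PosDef := PosDef.conjTranspose_mul_self A
    (mulVec_injective_iff_isUnit.mpr ((isUnit_iff_isUnit_det A).mpr hA))
  set S := CFC.sqrt (Aᵀ * A)
  have hS : S.PosSemidef := (CFC.sqrt_nonneg _).posSemidef
  have hSunit : IsUnit S := (CFC.isUnit_sqrt_iff _ hPD.posSemidef.nonneg).mpr hPD.isUnit
  have hU := transpose_mul_self_mul_inv_eq_one hS.transpose_eq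
    (CFC.sqrt_mul_sqrt_self _ hPD.posSemidef.nonneg) hSunit
  have hUS : A * S⁻¹ * S = A :=
    nonsing_inv_mul_cancel_right _ _ ((isUnit_iff_isUnit_det S).mp hSunit)
  refine ⟨hPD, hU, fun B hB => ?_⟩
  simpa only [hUS] using frobNorm_sub_mul_le_of_orthogonal hU hS hB

/-- For invertible real `A`, `AᵀA` is positive definite,
`B* = A ((AᵀA)^{1/2})⁻¹` is orthogonal, and `B*` minimizes the Frobenius distance
to `A` among orthogonal matrices. -/
theorem orthogonal_projection_closest (n : ℕ) (hn : 1 ≤ n)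
    (A : Matrix (Fin n) (Fin n) ℝ) (hA : IsUnit A.det) :
    (Aᵀ * A).PosDef ∧
    (A * ((Matrix.posSemidef_conjTranspose_mul_self A).sqrt)⁻¹)ᵀ *
      (A * ((Matrix.posSemidef_conjTranspose_mul_self A).sqrt)⁻¹) = 1 ∧
    ∀ B : Matrix (Fin n) (Fin n) ℝ, Bᵀ * B = 1 →
      frobNorm (A * ((Matrix.posSemidef_conjTranspose_mul_self A).sqrt)⁻¹ - A) ≤
        frobNorm (B - A) :=
  orthogonal_projection_closest_general n A hA
end

section
/- Let n ≥ 1 and suppose the real n×n matrix A has a singular value decomposition A = U · diag(s) · Vᵀ with U, V ∈ O(n) and s : Fin n → ℝ, s i ≥ 0 for all i. Then UVᵀ ∈ O(n), ‖UVᵀ − A‖_F² = Σ_{i=1}^n (s_i − 1)², and for every B ∈ O(n), ‖B − A‖_F² ≥ Σ_{i=1}^n (s_i − 1)². In particular, the minimum of ‖B − A‖_F² over B ∈ O(n) equals Σ_{i=1}^n (s_i − 1)² and is attained at B = UVᵀ. -/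
open Matrix

lemma trace_transpose_mul_self_nonneg {n : ℕ} (M : Matrix (Fin n) (Fin n) ℝ) :
    0 ≤ Matrix.trace (Mᵀ * M) := by
  have : Matrix.trace (Mᵀ * M) = ∑ j, ∑ i, (M i j)^2 := by
    simp [Matrix.trace, Matrix.diag, Matrix.mul_apply, sq]
  rw [this]
  positivity

lemma frobNorm_sq {n : ℕ} (M : Matrix (Fin n) (Fin n) ℝ) :
    frobNorm M ^ 2 = Matrix.trace (Mᵀ * M) :=
  Real.sq_sqrt (trace_transpose_mul_self_nonneg M)

lemma trace_mul_diagonal {n : ℕ} (M : Matrix (Fin n) (Fin n) ℝ) (s : Fin n → ℝ) :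
    Matrix.trace (M * Matrix.diagonal s) = ∑ i, M i i * s i := by
  simp [Matrix.trace, Matrix.diag, Matrix.mul_apply, Matrix.diagonal]

lemma diag_le_one {n : ℕ} (M : Matrix (Fin n) (Fin n) ℝ) (hM : Mᵀ * M = 1) (i : Fin n) :
    M i i ≤ 1 := by
  have h1 : (Mᵀ * M) i i = 1 := by rw [hM]; simp
  have h2 : ∑ j, (M j i)^2 = 1 := by
    rw [← h1]; simp [Matrix.mul_apply, sq]
  have h3 : (M i i)^2 ≤ 1 := by
    rw [← h2]
    exact Finset.single_le_sum (f := fun j => (M j i)^2) (fun j _ => sq_nonneg _)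
      (Finset.mem_univ i)
  nlinarith [sq_nonneg (M i i - 1)]

/-- If `A = U diag(s) Vᵀ` is an SVD of `A`, then `U Vᵀ` is orthogonal,
`‖UVᵀ - A‖_F² = Σ (s i - 1)²`, and every orthogonal `B` satisfies
`‖B - A‖_F² ≥ Σ (s i - 1)²`. -/
theorem svd_orthogonal_projection (n : ℕ) (hn : 1 ≤ n)
    (A U V : Matrix (Fin n) (Fin n) ℝ) (s : Fin n → ℝ)
    (hU : Uᵀ * U = 1) (hV : Vᵀ * V = 1) (hs : ∀ i, 0 ≤ s i)
    (hA : A = U * Matrix.diagonal s * Vᵀ) :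
    ((U * Vᵀ)ᵀ * (U * Vᵀ) = 1) ∧
    frobNorm (U * Vᵀ - A) ^ 2 = ∑ i, (s i - 1) ^ 2 ∧
    ∀ B : Matrix (Fin n) (Fin n) ℝ, Bᵀ * B = 1 →
      ∑ i, (s i - 1) ^ 2 ≤ frobNorm (B - A) ^ 2 := by
  have hUU : U * Uᵀ = 1 := mul_eq_one_comm.mp hU
  have hVV : V * Vᵀ = 1 := mul_eq_one_comm.mp hV
  -- (UVᵀ) is orthogonal
  have horth : (U * Vᵀ)ᵀ * (U * Vᵀ) = 1 := by
    simp only [Matrix.transpose_mul, Matrix.transpose_transpose, Matrix.mul_assoc]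
    rw [← Matrix.mul_assoc Uᵀ U, hU, Matrix.one_mul, hVV]
  -- trace (AᵀA) = ∑ s i ^ 2
  have htrA : Matrix.trace (Aᵀ * A) = ∑ i, s i ^ 2 := by
    rw [hA]
    have e : (U * Matrix.diagonal s * Vᵀ)ᵀ * (U * Matrix.diagonal s * Vᵀ)
        = V * (Matrix.diagonal s * (Matrix.diagonal s * Vᵀ)) := by
      simp only [Matrix.transpose_mul, Matrix.transpose_transpose,
        Matrix.diagonal_transpose, Matrix.mul_assoc]
      rw [← Matrix.mul_assoc Uᵀ U, hU, Matrix.one_mul]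
    rw [e, Matrix.trace_mul_comm]
    simp only [Matrix.mul_assoc]
    rw [hV, Matrix.mul_one, Matrix.diagonal_mul_diagonal, Matrix.trace_diagonal]
    simp [sq]
  -- general formula for trace (BᵀA)
  have htrBA : ∀ B : Matrix (Fin n) (Fin n) ℝ,
      Matrix.trace (Bᵀ * A) = ∑ i, (Vᵀ * Bᵀ * U) i i * s i := by
    intro B
    rw [hA, show Bᵀ * (U * Matrix.diagonal s * Vᵀ) = Bᵀ * U * Matrix.diagonal s * Vᵀ by
      simp only [Matrix.mul_assoc], Matrix.trace_mul_cycle, trace_mul_diagonal,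
      ← Matrix.mul_assoc]
  -- expansion of ‖B − A‖²
  have hexp : ∀ B : Matrix (Fin n) (Fin n) ℝ, Bᵀ * B = 1 →
      frobNorm (B - A) ^ 2 = (n : ℝ) - 2 * Matrix.trace (Bᵀ * A) + ∑ i, s i ^ 2 := by
    intro B hB
    rw [frobNorm_sq]
    have e : (B - A)ᵀ * (B - A) = Bᵀ * B - Bᵀ * A - Aᵀ * B + Aᵀ * A := by
      rw [Matrix.transpose_sub]
      simp only [Matrix.sub_mul, Matrix.mul_sub]
      abel
    rw [e, Matrix.trace_add, Matrix.trace_sub, Matrix.trace_sub, hB, Matrix.trace_one,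
      htrA]
    have e2 : Matrix.trace (Aᵀ * B) = Matrix.trace (Bᵀ * A) := by
      rw [← Matrix.trace_transpose (Aᵀ * B), Matrix.transpose_mul, Matrix.transpose_transpose]
    rw [e2]; simp; ring
  have hsum : ∑ i, (s i - 1) ^ 2 = (n : ℝ) - 2 * ∑ i, s i + ∑ i, s i ^ 2 := by
    simp [sub_sq, Finset.sum_add_distrib, Finset.sum_sub_distrib, Finset.mul_sum]
    ring
  refine ⟨horth, ?_, ?_⟩
  · rw [hexp _ horth, htrBA, hsum]
    have e : Vᵀ * (U * Vᵀ)ᵀ * U = 1 := by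
      simp only [Matrix.transpose_mul, Matrix.transpose_transpose, Matrix.mul_assoc]
      rw [hU, Matrix.mul_one, hV]
    rw [e]
    simp
  · intro B hB
    rw [hexp _ hB, htrBA, hsum]
    have hM : (Vᵀ * Bᵀ * U)ᵀ * (Vᵀ * Bᵀ * U) = 1 := by
      simp only [Matrix.transpose_mul, Matrix.transpose_transpose, Matrix.mul_assoc]
      rw [← Matrix.mul_assoc V Vᵀ, hVV, Matrix.one_mul,
        ← Matrix.mul_assoc B Bᵀ, mul_eq_one_comm.mp hB, Matrix.one_mul, hU]
    have hle : ∑ i, (Vᵀ * Bᵀ * U) i i * s i ≤ ∑ i, s i := by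
      apply Finset.sum_le_sum
      intro i _
      calc (Vᵀ * Bᵀ * U) i i * s i ≤ 1 * s i :=
            mul_le_mul_of_nonneg_right (diag_le_one _ hM i) (hs i)
        _ = s i := one_mul _
    linarith
end

section
/- Let V be a finite nonempty set, m > 0, and K : V × V → ℝ a symmetric kernel (K(i,j) = K(j,i)) that is m-coercive: for every f : V → ℝ, Σ_{i,j} f(i) K(i,j) f(j) ≥ m Σ_i f(i)². Let n ≥ 1 and let A, B : V → O(n) be orthogonal-matrix-valued functions, and define (S A)(i) = Σ_j K(i,j) A(j) (entrywise). If Σ_i ⟨B(i), (S A)(i)⟩_F ≥ Σ_i ⟨A(i), (S A)(i)⟩_F, then Σ_i ⟨B(i), (S B)(i)⟩_F ≥ Σ_i ⟨A(i), (S A)(i)⟩_F + m Σ_i ‖B(i) − A(i)‖_F². Consequently the Lyapunov functional Ẽ(A) = Σ_i (n − ⟨A(i), (S A)(i)⟩_F) satisfies Ẽ(B) ≤ Ẽ(A) − m Σ_i ‖B(i) − A(i)‖_F². -/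
open Matrix

section aux
variable {V : Type*} [Fintype V] {n : ℕ}

private lemma trace_entry (X Y : Matrix (Fin n) (Fin n) ℝ) :
    Matrix.trace (Xᵀ * Y) = ∑ b, ∑ a, X a b * Y a b := by
  simp [Matrix.trace, Matrix.mul_apply, Matrix.diag]

private lemma trace_symm (X Y : Matrix (Fin n) (Fin n) ℝ) :
    Matrix.trace (Xᵀ * Y) = Matrix.trace (Yᵀ * X) := by
  rw [trace_entry, trace_entry]
  simp [mul_comm]

private lemma trace_sum_smul (X : Matrix (Fin n) (Fin n) ℝ) (c : V → ℝ)
    (Y : V → Matrix (Fin n) (Fin n) ℝ) :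
    Matrix.trace (Xᵀ * ∑ j, c j • Y j) = ∑ j, c j * Matrix.trace (Xᵀ * Y j) := by
  rw [Matrix.mul_sum, Matrix.trace_sum]
  simp [Matrix.mul_smul]

private lemma swap3 (g : V → Fin n → Fin n → ℝ) :
    ∑ i, ∑ b, ∑ a, g i b a = ∑ b, ∑ a, ∑ i, g i b a := by
  rw [Finset.sum_comm]
  exact Finset.sum_congr rfl fun b _ => Finset.sum_comm

end aux

/-- For a symmetric `m`-coercive kernel `K` on a finite set `V`, orthogonal
matrix fields `A, B : V → O(n)` with `Σᵢ ⟨B i, (SA) i⟩_F ≥ Σᵢ ⟨A i, (SA) i⟩_F` (where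
`(SA) i = Σⱼ K i j • A j`) satisfy
`Σᵢ ⟨B i, (SB) i⟩_F ≥ Σᵢ ⟨A i, (SA) i⟩_F + m Σᵢ ‖B i - A i‖_F²`, so the Lyapunov
functional `Ẽ(A) = Σᵢ (n - ⟨A i, (SA) i⟩_F)` satisfies `Ẽ(B) ≤ Ẽ(A) - m Σᵢ ‖B i - A i‖_F²`. -/
theorem lyapunov_decrease_matrix (V : Type*) [Fintype V] [Nonempty V]
    (m : ℝ) (hm : 0 < m) (K : V → V → ℝ) (hsym : ∀ i j, K i j = K j i)
    (hcoer : ∀ f : V → ℝ, m * ∑ i, f i ^ 2 ≤ ∑ i, ∑ j, f i * K i j * f j)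
    (n : ℕ) (hn : 1 ≤ n) (A B : V → Matrix (Fin n) (Fin n) ℝ)
    (hA : ∀ i, (A i)ᵀ * A i = 1) (hB : ∀ i, (B i)ᵀ * B i = 1)
    (h : ∑ i, Matrix.trace ((A i)ᵀ * ∑ j, K i j • A j) ≤
         ∑ i, Matrix.trace ((B i)ᵀ * ∑ j, K i j • A j)) :
    (∑ i, Matrix.trace ((A i)ᵀ * ∑ j, K i j • A j))
        + m * ∑ i, frobNorm (B i - A i) ^ 2 ≤
      ∑ i, Matrix.trace ((B i)ᵀ * ∑ j, K i j • B j) ∧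
    ∑ i, ((n : ℝ) - Matrix.trace ((B i)ᵀ * ∑ j, K i j • B j)) ≤
      (∑ i, ((n : ℝ) - Matrix.trace ((A i)ᵀ * ∑ j, K i j • A j)))
        - m * ∑ i, frobNorm (B i - A i) ^ 2 := by
  set D : V → Matrix (Fin n) (Fin n) ℝ := fun i => B i - A i with hD
  -- frobenius norm squared
  have hfrob : ∀ i, frobNorm (B i - A i) ^ 2 = Matrix.trace ((D i)ᵀ * D i) := by
    intro i
    rw [frobNorm, Real.sq_sqrt]
    rw [trace_entry]
    exact Finset.sum_nonneg fun b _ => Finset.sum_nonneg fun a _ => mul_self_nonneg _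
  -- rewrite inner sums
  simp only [trace_sum_smul] at h ⊢
  -- coercivity in matrix form
  have key1 : m * ∑ i, Matrix.trace ((D i)ᵀ * D i)
      ≤ ∑ i, ∑ j, K i j * Matrix.trace ((D i)ᵀ * D j) := by
    have lhs_eq : m * ∑ i, Matrix.trace ((D i)ᵀ * D i)
        = ∑ b, ∑ a, (m * ∑ i, (D i a b) ^ 2) := by
      simp only [trace_entry]
      rw [swap3]
      simp only [Finset.mul_sum, sq]
    have rhs_eq : ∑ i, ∑ j, K i j * Matrix.trace ((D i)ᵀ * D j)
        = ∑ b, ∑ a, (∑ i, ∑ j, (D i a b) * K i j * (D j a b)) := by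
      simp only [trace_entry, Finset.mul_sum]
      rw [show (∑ i, ∑ j, ∑ b, ∑ a, K i j * (D i a b * D j a b))
          = ∑ i, ∑ b, ∑ a, ∑ j, K i j * (D i a b * D j a b) from
        Finset.sum_congr rfl fun i _ => swap3 _]
      rw [swap3 (fun i b a => ∑ j, K i j * (D i a b * D j a b))]
      refine Finset.sum_congr rfl fun b _ => Finset.sum_congr rfl fun a _ =>
        Finset.sum_congr rfl fun i _ => Finset.sum_congr rfl fun j _ => by ring
    rw [lhs_eq, rhs_eq]
    exact Finset.sum_le_sum fun b _ => Finset.sum_le_sum fun a _ =>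
      hcoer (fun i => D i a b)
  -- expansion lemma
  have hsplit : ∀ i j, Matrix.trace ((B i)ᵀ * B j)
      = Matrix.trace ((A i)ᵀ * A j) + Matrix.trace ((A i)ᵀ * D j)
        + Matrix.trace ((D i)ᵀ * A j) + Matrix.trace ((D i)ᵀ * D j) := by
    intro i j
    have hBi : B i = A i + D i := by simp [hD]
    have hBj : B j = A j + D j := by simp [hD]
    rw [hBi, hBj, transpose_add, add_mul, mul_add, mul_add, trace_add, trace_add,
      trace_add]
    ring
  -- cross term equals the gap
  have hDA : ∑ i, ∑ j, K i j * Matrix.trace ((D i)ᵀ * A j)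
      = (∑ i, ∑ j, K i j * Matrix.trace ((B i)ᵀ * A j))
        - ∑ i, ∑ j, K i j * Matrix.trace ((A i)ᵀ * A j) := by
    rw [← Finset.sum_sub_distrib]
    refine Finset.sum_congr rfl fun i _ => ?_
    rw [← Finset.sum_sub_distrib]
    refine Finset.sum_congr rfl fun j _ => ?_
    have : D i = B i - A i := rfl
    rw [this, transpose_sub, sub_mul, trace_sub]
    ring
  have hAD : ∑ i, ∑ j, K i j * Matrix.trace ((A i)ᵀ * D j)
      = ∑ i, ∑ j, K i j * Matrix.trace ((D i)ᵀ * A j) := by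
    rw [Finset.sum_comm]
    refine Finset.sum_congr rfl fun i _ => Finset.sum_congr rfl fun j _ => ?_
    rw [hsym j i, trace_symm]
  have hgap : 0 ≤ (∑ i, ∑ j, K i j * Matrix.trace ((B i)ᵀ * A j))
        - ∑ i, ∑ j, K i j * Matrix.trace ((A i)ᵀ * A j) := by linarith
  have hBB : ∑ i, ∑ j, K i j * Matrix.trace ((B i)ᵀ * B j)
      = ∑ i, ∑ j, K i j * Matrix.trace ((A i)ᵀ * A j)
        + ∑ i, ∑ j, K i j * Matrix.trace ((A i)ᵀ * D j)
        + ∑ i, ∑ j, K i j * Matrix.trace ((D i)ᵀ * A j)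
        + ∑ i, ∑ j, K i j * Matrix.trace ((D i)ᵀ * D j) := by
    rw [← Finset.sum_add_distrib, ← Finset.sum_add_distrib, ← Finset.sum_add_distrib]
    refine Finset.sum_congr rfl fun i _ => ?_
    rw [← Finset.sum_add_distrib, ← Finset.sum_add_distrib, ← Finset.sum_add_distrib]
    refine Finset.sum_congr rfl fun j _ => ?_
    rw [hsplit i j]; ring
  have hfrobsum : ∑ i, frobNorm (B i - A i) ^ 2 = ∑ i, Matrix.trace ((D i)ᵀ * D i) :=
    Finset.sum_congr rfl fun i _ => hfrob i
  have first : (∑ i, ∑ j, K i j * Matrix.trace ((A i)ᵀ * A j))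
        + m * ∑ i, frobNorm (B i - A i) ^ 2
      ≤ ∑ i, ∑ j, K i j * Matrix.trace ((B i)ᵀ * B j) := by
    rw [hfrobsum, hBB, hAD, hDA]
    linarith
  refine ⟨first, ?_⟩
  rw [Finset.sum_sub_distrib, Finset.sum_sub_distrib]
  linarith
end

section
/- Let n ≥ 1. For all real n×n orthogonal matrices A, B with det(A) = 1 and det(B) = −1, one has ‖A − B‖_F ≥ 2; moreover there exist orthogonal A, B with det(A) = 1, det(B) = −1 and ‖A − B‖_F = 2. That is, the Frobenius distance between SO(n) and SO⁻(n) equals 2. -/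
/-! With `Q = Aᵀ * B`, orthogonal invariance gives `‖A - B‖_F = ‖1 - Q‖_F`, where `Q` is orthogonal
with `det Q = -1`. Then `det (Q + 1) = det Q * det (1 + Qᵀ) = -det (Q + 1)`, so `Q v = -v` for some
`v ≠ 0`, and since the Frobenius norm dominates the operator norm,
`‖1 - Q‖_F ≥ |(1 - Q) v| / |v| = 2`. Equality holds for `A = 1` and `B` a coordinate reflection. -/

open Matrix

namespace Matrix

attribute [local instance] frobeniusNormedAddCommGroup

theorem frobNorm_eq_frobenius_norm {n : ℕ} (A : Matrix (Fin n) (Fin n) ℝ) :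
    frobNorm A = ‖A‖ := by
  have htrace : trace (Aᵀ * A) = ∑ i, ∑ j, A i j ^ 2 := by
    simp only [trace, diag, mul_apply, transpose_apply, sq]
    exact Finset.sum_comm
  rw [frobNorm, htrace, frobenius_norm_def, ← Real.sqrt_eq_rpow]
  simp only [Real.norm_eq_abs, Real.rpow_two, sq_abs]

theorem frobNorm_orthogonal_mul {n : ℕ} {A : Matrix (Fin n) (Fin n) ℝ} (hA : Aᵀ * A = 1)
    (X : Matrix (Fin n) (Fin n) ℝ) : frobNorm (A * X) = frobNorm X := by
  rw [frobNorm, frobNorm, transpose_mul, mul_assoc, ← mul_assoc Aᵀ, hA, one_mul]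

theorem frobenius_norm_mulVec_le {m n α : Type*} [Fintype m] [Fintype n] [RCLike α]
    (A : Matrix m n α) (v : n → α) :
    ‖WithLp.toLp 2 (A *ᵥ v)‖ ≤ ‖A‖ * ‖WithLp.toLp 2 v‖ := by
  rw [← frobenius_norm_replicateCol (ι := Fin 1), ← frobenius_norm_replicateCol (ι := Fin 1),
    replicateCol_mulVec]
  exact frobenius_norm_mul A _

theorem exists_mulVec_eq_neg_of_orthogonal_of_det_eq_neg_one {m K : Type*} [Fintype m]
    [DecidableEq m] [Field K] [NeZero (2 : K)] {Q : Matrix m m K} (hQ : Qᵀ * Q = 1)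
    (hdet : Q.det = -1) : ∃ v ≠ 0, Q *ᵥ v = -v := by
  have hdet_add_one : (Q + 1).det = -(Q + 1).det :=
    calc (Q + 1).det = Q.det * (1 + Qᵀ).det := by
          rw [← det_mul, mul_add, mul_one, mul_eq_one_comm.mp hQ]
      _ = -(Q + 1).det := by
          rw [hdet, ← det_transpose (Q + 1), transpose_add, transpose_one, add_comm, neg_one_mul]
  have hsingular : (Q + 1).det = 0 := by
    refine (mul_eq_zero.mp ?_).resolve_left (two_ne_zero (α := K))
    rw [two_mul]
    nth_rewrite 2 [hdet_add_one]
    exact add_neg_cancel _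
  obtain ⟨v, hv, hQv⟩ := exists_mulVec_eq_zero_iff.mpr hsingular
  exact ⟨v, hv, by rwa [add_mulVec, one_mulVec, add_eq_zero_iff_eq_neg] at hQv⟩

theorem two_le_frobenius_norm_one_sub {m : Type*} [Fintype m] [DecidableEq m]
    {Q : Matrix m m ℝ} (hQ : Qᵀ * Q = 1) (hdet : Q.det = -1) : 2 ≤ ‖1 - Q‖ := by
  obtain ⟨v, hv, hQv⟩ := exists_mulVec_eq_neg_of_orthogonal_of_det_eq_neg_one hQ hdet
  have hv_pos : 0 < ‖WithLp.toLp 2 v‖ := norm_pos_iff.mpr (by simpa using hv)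
  have hmulVec : (1 - Q) *ᵥ v = (2 : ℝ) • v := by
    rw [sub_mulVec, one_mulVec, hQv, sub_neg_eq_add, two_smul]
  have := frobenius_norm_mulVec_le (1 - Q) v
  rw [hmulVec, WithLp.toLp_smul, norm_smul, Real.norm_two] at this
  exact le_of_mul_le_mul_right this hv_pos

section CoordinateReflection

variable {m R : Type*} [Fintype m] [DecidableEq m]

def coordinateReflection [CommRing R] (i : m) : Matrix m m R :=
  diagonal (Function.update 1 i (-1))

theorem transpose_mul_self_coordinateReflection [CommRing R] (i : m) :
    (coordinateReflection i : Matrix m m R)ᵀ * coordinateReflection i = 1 := by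
  rw [coordinateReflection, diagonal_transpose, diagonal_mul_diagonal, ← diagonal_one]
  congr 1
  funext j
  rcases eq_or_ne j i with rfl | hj <;> simp [*]

theorem det_coordinateReflection [CommRing R] (i : m) :
    (coordinateReflection i : Matrix m m R).det = -1 := by
  rw [coordinateReflection, det_diagonal, Finset.prod_update_of_mem (Finset.mem_univ i)]
  simp

theorem frobenius_norm_one_sub_coordinateReflection (i : m) :
    ‖1 - (coordinateReflection i : Matrix m m ℝ)‖ = 2 := by
  have hdiff : (fun j => 1 - Function.update (1 : m → ℝ) i (-1) j) = Pi.single i 2 := by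
    funext j
    rcases eq_or_ne j i with rfl | hj <;> norm_num [*]
  rw [coordinateReflection, ← diagonal_one, diagonal_sub, frobenius_norm_diagonal, hdiff,
    PiLp.toLp_single, PiLp.norm_single, Real.norm_two]

end CoordinateReflection

end Matrix

/-- The Frobenius distance between `SO(n)` and `SO⁻(n)` equals `2`:
any `A ∈ SO(n)`, `B ∈ SO⁻(n)` satisfy `‖A - B‖_F ≥ 2`, and the value `2` is attained. -/
theorem dist_SO_SOneg_eq_two (n : ℕ) (hn : 1 ≤ n) :
    (∀ A B : Matrix (Fin n) (Fin n) ℝ, Aᵀ * A = 1 → Bᵀ * B = 1 →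
      A.det = 1 → B.det = -1 → 2 ≤ frobNorm (A - B)) ∧
    (∃ A B : Matrix (Fin n) (Fin n) ℝ, Aᵀ * A = 1 ∧ Bᵀ * B = 1 ∧
      A.det = 1 ∧ B.det = -1 ∧ frobNorm (A - B) = 2) := by
  refine ⟨fun A B hA hB hdetA hdetB => ?_, ?_⟩
  · have hfactor : A - B = A * (1 - Aᵀ * B) := by
      rw [mul_sub, mul_one, ← mul_assoc, mul_eq_one_comm.mp hA, one_mul]
    have hQ : (Aᵀ * B)ᵀ * (Aᵀ * B) = 1 := by
      rw [transpose_mul, transpose_transpose, mul_assoc, ← mul_assoc A,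
        mul_eq_one_comm.mp hA, one_mul, hB]
    have hdetQ : (Aᵀ * B).det = -1 := by rw [det_mul, det_transpose, hdetA, hdetB, one_mul]
    rw [hfactor, frobNorm_orthogonal_mul hA, frobNorm_eq_frobenius_norm]
    exact two_le_frobenius_norm_one_sub hQ hdetQ
  · let i : Fin n := ⟨0, hn⟩
    refine ⟨1, coordinateReflection i, by simp, transpose_mul_self_coordinateReflection i,
      det_one, det_coordinateReflection i, ?_⟩
    rw [frobNorm_eq_frobenius_norm, frobenius_norm_one_sub_coordinateReflection]
end

section
/- Let V be a finite nonempty set, m > 0, and K : V × V → ℝ a symmetric kernel (K(i,j) = K(j,i)) that is m-coercive: for every f : V → ℝ, Σ_{i,j} f(i) K(i,j) f(j) ≥ m Σ_i f(i)². Let a, b : V → ℝ take values in {−1, +1}, with b ≠ a, and suppose Σ_{i,j} b(i) K(i,j) a(j) ≥ Σ_{i,j} a(i) K(i,j) a(j). Then the discrete Lyapunov functional Ẽ(f) = Σ_i (1 − f(i) · Σ_j K(i,j) f(j)) satisfies Ẽ(b) ≤ Ẽ(a) − 2m. -/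
/-- For a symmetric `m`-coercive kernel `K` on a finite set `V`,
`±1`-valued configurations `a ≠ b` with `Σᵢⱼ b i K i j a j ≥ Σᵢⱼ a i K i j a j`
satisfy `Ẽ(b) ≤ Ẽ(a) - 2m`, where `Ẽ(f) = Σᵢ (1 - f i · Σⱼ K i j f j)`. -/
theorem lyapunov_decrease_scalar (V : Type*) [Fintype V] [Nonempty V]
    (m : ℝ) (hm : 0 < m) (K : V → V → ℝ) (hsym : ∀ i j, K i j = K j i)
    (hcoer : ∀ f : V → ℝ, m * ∑ i, f i ^ 2 ≤ ∑ i, ∑ j, f i * K i j * f j)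
    (a b : V → ℝ) (ha : ∀ i, a i = 1 ∨ a i = -1) (hb : ∀ i, b i = 1 ∨ b i = -1)
    (hne : b ≠ a)
    (h : ∑ i, ∑ j, a i * K i j * a j ≤ ∑ i, ∑ j, b i * K i j * a j) :
    ∑ i, (1 - b i * ∑ j, K i j * b j) ≤
      (∑ i, (1 - a i * ∑ j, K i j * a j)) - 2 * m := by
  -- Sab = Sba by symmetry
  have hswap : ∑ i, ∑ j, a i * K i j * b j = ∑ i, ∑ j, b i * K i j * a j := by
    rw [Finset.sum_comm]
    apply Finset.sum_congr rfl; intro i _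
    apply Finset.sum_congr rfl; intro j _
    rw [hsym j i]; ring
  -- lower bound on sum of squares of b - a
  obtain ⟨i0, hi0⟩ : ∃ i, b i ≠ a i := by
    by_contra hc
    push_neg at hc
    exact hne (funext hc)
  have hsq : (2:ℝ) ≤ ∑ i, (b i - a i) ^ 2 := by
    have h4 : (b i0 - a i0) ^ 2 = 4 := by
      rcases ha i0 with h1 | h1 <;> rcases hb i0 with h2 | h2 <;>
        simp [h1, h2] at hi0 ⊢ <;> norm_num
    calc (2:ℝ) ≤ (b i0 - a i0) ^ 2 := by rw [h4]; norm_num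
    _ ≤ ∑ i, (b i - a i) ^ 2 := by
        apply Finset.single_le_sum (f := fun i => (b i - a i) ^ 2)
          (fun i _ => sq_nonneg _) (Finset.mem_univ i0)
  have hc := hcoer (fun i => b i - a i)
  have hexp : ∑ i, ∑ j, (b i - a i) * K i j * (b j - a j)
      = (∑ i, ∑ j, b i * K i j * b j) - (∑ i, ∑ j, b i * K i j * a j)
        - (∑ i, ∑ j, a i * K i j * b j) + ∑ i, ∑ j, a i * K i j * a j := by
    simp only [← Finset.sum_sub_distrib, ← Finset.sum_add_distrib]
    apply Finset.sum_congr rfl; intro i _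
    apply Finset.sum_congr rfl; intro j _
    ring
  -- key: Q(b) ≥ Q(a) + 2m
  have key : (∑ i, ∑ j, a i * K i j * a j) + 2 * m ≤ ∑ i, ∑ j, b i * K i j * b j := by
    have h1 : 2 * m ≤ m * ∑ i, (b i - a i) ^ 2 := by nlinarith
    rw [hexp, hswap] at hc
    nlinarith
  -- rewrite goals
  have hEb : ∑ i, (1 - b i * ∑ j, K i j * b j)
      = (Fintype.card V : ℝ) - ∑ i, ∑ j, b i * K i j * b j := by
    rw [Finset.sum_sub_distrib, Finset.sum_const, Finset.card_univ, nsmul_eq_mul, mul_one]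
    congr 1
    apply Finset.sum_congr rfl; intro i _
    rw [Finset.mul_sum]
    apply Finset.sum_congr rfl; intro j _
    ring
  have hEa : ∑ i, (1 - a i * ∑ j, K i j * a j)
      = (Fintype.card V : ℝ) - ∑ i, ∑ j, a i * K i j * a j := by
    rw [Finset.sum_sub_distrib, Finset.sum_const, Finset.card_univ, nsmul_eq_mul, mul_one]
    congr 1
    apply Finset.sum_congr rfl; intro i _
    rw [Finset.mul_sum]
    apply Finset.sum_congr rfl; intro j _
    ring
  rw [hEa, hEb]
  linarith
end

section
/- Let V be a finite nonempty set, m > 0, and K : V × V → ℝ a symmetric kernel (K(i,j) = K(j,i)) that is m-coercive: for every f : V → ℝ, Σ_{i,j} f(i) K(i,j) f(j) ≥ m Σ_i f(i)², and suppose K is an ℓ∞-contraction: for every f : V → ℝ with |f(i)| ≤ 1 for all i, also |Σ_j K(i,j) f(j)| ≤ 1 for all i. Let (A_s)_{s≥0} be a sequence of functions V → {−1,+1} such that for every s, Σ_{i,j} A_{s+1}(i) K(i,j) A_s(j) = max over b : V → {−1,+1} of Σ_{i,j} b(i) K(i,j) A_s(j), and A_{s+1} = A_s whenever A_s itself attains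 this maximum. Then the sequence is eventually constant: there exists N with N ≤ Ẽ(A_0)/(2m), where Ẽ(f) = Σ_i (1 − f(i) · Σ_j K(i,j) f(j)), such that A_s = A_N for all s ≥ N. -/
/-- The discretized MBO iteration for `±1`-valued configurations, with a
symmetric `m`-coercive kernel `K` that is an `ℓ∞`-contraction, converges in a finite
number of iterations: the sequence is eventually constant from some index
`N ≤ Ẽ(A 0)/(2m)` on, where `Ẽ(f) = Σᵢ (1 - f i · Σⱼ K i j f j)`. -/
theorem discrete_MBO_converges (V : Type*) [Fintype V] [Nonempty V]
    (m : ℝ) (hm : 0 < m) (K : V → V → ℝ) (hsym : ∀ i j, K i j = K j i)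
    (hcoer : ∀ f : V → ℝ, m * ∑ i, f i ^ 2 ≤ ∑ i, ∑ j, f i * K i j * f j)
    (hcontr : ∀ f : V → ℝ, (∀ i, |f i| ≤ 1) → ∀ i, |∑ j, K i j * f j| ≤ 1)
    (A : ℕ → V → ℝ) (hpm : ∀ s i, A s i = 1 ∨ A s i = -1)
    (hmax : ∀ s, ∀ b : V → ℝ, (∀ i, b i = 1 ∨ b i = -1) →
      ∑ i, ∑ j, b i * K i j * A s j ≤ ∑ i, ∑ j, A (s + 1) i * K i j * A s j)
    (htie : ∀ s, (∀ b : V → ℝ, (∀ i, b i = 1 ∨ b i = -1) →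
      ∑ i, ∑ j, b i * K i j * A s j ≤ ∑ i, ∑ j, A s i * K i j * A s j) →
      A (s + 1) = A s) :
    ∃ N : ℕ, (N : ℝ) ≤ (∑ i, (1 - A 0 i * ∑ j, K i j * A 0 j)) / (2 * m) ∧
      ∀ s, N ≤ s → A s = A N := by
  classical
  set E : ℕ → ℝ := fun s => ∑ i, (1 - A s i * ∑ j, K i j * A s j) with hEdef
  have habs : ∀ s i, |A s i| = 1 := by
    intro s i; rcases hpm s i with h | h <;> simp [h]
  -- energy is nonnegative
  have hEnn : ∀ s, 0 ≤ E s := by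
    intro s
    apply Finset.sum_nonneg
    intro i _
    have h1 : |∑ j, K i j * A s j| ≤ 1 := hcontr (A s) (fun k => (habs s k).le) i
    have h2 : A s i * (∑ j, K i j * A s j) ≤ 1 := by
      calc A s i * (∑ j, K i j * A s j) ≤ |A s i * (∑ j, K i j * A s j)| := le_abs_self _
        _ = |A s i| * |∑ j, K i j * A s j| := abs_mul _ _
        _ ≤ 1 := by rw [habs]; simpa using h1
    linarith
  -- energy as card minus quadratic form
  have hEQ : ∀ t, E t = (Fintype.card V : ℝ) - ∑ i, ∑ j, A t i * K i j * A t j := by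
    intro t
    have hterm : ∀ i, A t i * ∑ j, K i j * A t j = ∑ j, A t i * K i j * A t j := by
      intro i; rw [Finset.mul_sum]
      apply Finset.sum_congr rfl; intro j _; ring
    simp only [hEdef, Finset.sum_sub_distrib, hterm, Finset.sum_const, Finset.card_univ,
      nsmul_eq_mul, mul_one]
  -- energy decrease
  have hdec : ∀ s, E (s + 1) + m * ∑ i, (A (s + 1) i - A s i) ^ 2 ≤ E s := by
    intro s
    set d : V → ℝ := fun i => A (s + 1) i - A s i with hd
    have hsplit : (∑ i, ∑ j, A (s + 1) i * K i j * A (s + 1) j)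
        = ((∑ i, ∑ j, A s i * K i j * A s j) + (∑ i, ∑ j, d i * K i j * d j)
          + (∑ i, ∑ j, d i * K i j * A s j)) + (∑ i, ∑ j, A s i * K i j * d j) := by
      rw [← Finset.sum_add_distrib, ← Finset.sum_add_distrib, ← Finset.sum_add_distrib]
      apply Finset.sum_congr rfl; intro i _
      rw [← Finset.sum_add_distrib, ← Finset.sum_add_distrib, ← Finset.sum_add_distrib]
      apply Finset.sum_congr rfl; intro j _
      simp only [hd]; ring
    have hswap : (∑ i, ∑ j, A s i * K i j * d j) = ∑ i, ∑ j, d i * K i j * A s j := by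
      rw [Finset.sum_comm]
      apply Finset.sum_congr rfl; intro i _
      apply Finset.sum_congr rfl; intro j _
      rw [hsym]; ring
    have hcross : 0 ≤ ∑ i, ∑ j, d i * K i j * A s j := by
      have h := hmax s (A s) (hpm s)
      have hsub : (∑ i, ∑ j, d i * K i j * A s j)
          = (∑ i, ∑ j, A (s + 1) i * K i j * A s j)
            - ∑ i, ∑ j, A s i * K i j * A s j := by
        rw [← Finset.sum_sub_distrib]
        apply Finset.sum_congr rfl; intro i _
        rw [← Finset.sum_sub_distrib]
        apply Finset.sum_congr rfl; intro j _
        simp only [hd]; ring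
      rw [hsub]; linarith
    have hco := hcoer d
    have e1 := hEQ s
    have e2 := hEQ (s + 1)
    simp only [hd] at *
    linarith
  -- strict decrease when a step changes
  have hdec4 : ∀ s, A (s + 1) ≠ A s → E (s + 1) + 4 * m ≤ E s := by
    intro s hne
    have h := hdec s
    have h4 : (4 : ℝ) ≤ ∑ i, (A (s + 1) i - A s i) ^ 2 := by
      obtain ⟨i0, hi0⟩ : ∃ i, A (s + 1) i ≠ A s i := by
        by_contra hc; push_neg at hc; exact hne (funext hc)
      have hterm : (4 : ℝ) ≤ (A (s + 1) i0 - A s i0) ^ 2 := by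
        rcases hpm (s + 1) i0 with h1 | h1 <;> rcases hpm s i0 with h2 | h2 <;>
          simp [h1, h2] at hi0 ⊢ <;> norm_num
      calc (4 : ℝ) ≤ (A (s + 1) i0 - A s i0) ^ 2 := hterm
        _ ≤ ∑ i, (A (s + 1) i - A s i) ^ 2 :=
          Finset.single_le_sum (f := fun i => (A (s + 1) i - A s i) ^ 2)
            (fun i _ => sq_nonneg _) (Finset.mem_univ i0)
    nlinarith
  -- once fixed, fixed forever
  have hstep : ∀ u, A (u + 1) = A u → A (u + 2) = A (u + 1) := by
    intro u hu
    apply htie (u + 1)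
    intro b hb
    have h := hmax u b hb
    rw [hu] at h
    rw [hu]
    exact h
  have hconst : ∀ s, A (s + 1) = A s → ∀ t, s ≤ t → A t = A s := by
    intro s hs
    have key : ∀ k, A (s + k) = A s ∧ A (s + k + 1) = A (s + k) := by
      intro k
      induction k with
      | zero => exact ⟨rfl, hs⟩
      | succ k ih =>
        refine ⟨ih.2.trans ih.1, ?_⟩
        exact hstep (s + k) ih.2
    intro t ht
    obtain ⟨k, rfl⟩ := Nat.exists_eq_add_of_le ht
    exact (key k).1
  -- cumulative lower bound
  have hlower : ∀ s : ℕ, (∀ t < s, A (t + 1) ≠ A t) → E s + 4 * m * s ≤ E 0 := by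
    intro s hs
    induction s with
    | zero => simp
    | succ n ih =>
      have h1 := ih (fun t ht => hs t (ht.trans (Nat.lt_succ_self n)))
      have h2 := hdec4 n (hs n (Nat.lt_succ_self n))
      push_cast
      push_cast at h1
      linarith
  have hex : ∃ s, A (s + 1) = A s := by
    by_contra h
    push_neg at h
    obtain ⟨n, hn⟩ := exists_nat_gt (E 0 / (4 * m))
    have hl := hlower n (fun t _ => h t)
    have hEn := hEnn n
    rw [div_lt_iff₀ (by linarith)] at hn
    linarith
  refine ⟨Nat.find hex, ?_, ?_⟩
  · have hN := Nat.find_spec hex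
    have hmin : ∀ t < Nat.find hex, A (t + 1) ≠ A t := fun t ht => Nat.find_min hex ht
    have hb := hlower (Nat.find hex) hmin
    have hEN := hEnn (Nat.find hex)
    have hcast : (0 : ℝ) ≤ (Nat.find hex : ℝ) := Nat.cast_nonneg _
    rw [le_div_iff₀ (by linarith)]
    nlinarith
  · intro s hs
    have hN := Nat.find_spec hex
    rw [hconst (Nat.find hex) hN s hs]
end

section
/- Let V be a finite nonempty set, m > 0, and K : V × V → ℝ a symmetric kernel (K(i,j) = K(j,i)) that is m-coercive: for every f : V → ℝ, Σ_{i,j} f(i) K(i,j) f(j) ≥ m Σ_i f(i)². Let n ≥ 2 and let A, B : V → O(n) with (S A)(i) = Σ_j K(i,j) A(j) (entrywise), and suppose Σ_i ⟨B(i), (S A)(i)⟩_F ≥ Σ_i ⟨A(i), (S A)(i)⟩_F. If there exists i₀ ∈ V with det(B(i₀)) · det(A(i₀)) < 0, then the Lyapunov functional Ẽ(A) = Σ_i (n − ⟨A(i), (S A)(i)⟩_F) satisfies Ẽ(B) ≤ Ẽ(A) − 4m. -/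
open Matrix


lemma trace_orth_le' {n : ℕ} (Q : Matrix (Fin n) (Fin n) ℝ) (hQ : Qᵀ * Q = 1) :
    Q.trace ≤ n := by
  have hd : ∀ i, Q i i ≤ 1 := by
    intro i
    have h1 : ∑ j, Q j i ^ 2 = 1 := by
      have := congrArg (fun M => M i i) hQ
      simpa [Matrix.mul_apply, Matrix.one_apply, sq] using this
    have h2 : Q i i ^ 2 ≤ 1 := by
      rw [← h1]
      exact Finset.single_le_sum (f := fun j => Q j i ^ 2) (fun j _ => sq_nonneg _)
        (Finset.mem_univ i)
    nlinarith
  have ht : Q.trace = ∑ i, Q i i := by simp [Matrix.trace, Matrix.diag]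
  rw [ht]
  calc ∑ i, Q i i ≤ ∑ _i : Fin n, (1:ℝ) := Finset.sum_le_sum (fun i _ => hd i)
    _ = n := by simp

lemma trace_orth_det_neg' {n : ℕ} (Q : Matrix (Fin n) (Fin n) ℝ) (hQ : Qᵀ * Q = 1)
    (hdet : Q.det < 0) : Q.trace ≤ (n : ℝ) - 2 := by
  have hdet1 : Q.det = -1 := by
    have h2 : Q.det ^ 2 = 1 := by
      have := congrArg Matrix.det hQ
      simpa [Matrix.det_mul, Matrix.det_transpose, sq] using this
    nlinarith
  have hsing : (Q + 1).det = 0 := by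
    have h1 : Qᵀ * (Q + 1) = (Q + 1)ᵀ := by
      rw [Matrix.mul_add, hQ, Matrix.transpose_add, Matrix.transpose_one, Matrix.mul_one]
      rw [add_comm]
    have h2 := congrArg Matrix.det h1
    rw [Matrix.det_mul, Matrix.det_transpose, Matrix.det_transpose, hdet1] at h2
    linarith
  obtain ⟨v, hv0, hv⟩ := Matrix.exists_mulVec_eq_zero_iff.mpr hsing
  have hQv : Q *ᵥ v = -v := by
    have h0 : Q *ᵥ v + v = 0 := by
      simpa [Matrix.add_mulVec, Matrix.one_mulVec] using hv
    exact eq_neg_of_add_eq_zero_left h0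
  have hc : 0 < ∑ i, v i ^ 2 := by
    obtain ⟨i, hi⟩ := Function.ne_iff.mp hv0
    have h0 : 0 < v i ^ 2 := lt_of_le_of_ne (sq_nonneg _) (Ne.symm (pow_ne_zero 2 hi))
    exact lt_of_lt_of_le h0 (Finset.single_le_sum (f := fun j => v j ^ 2)
      (fun j _ => sq_nonneg _) (Finset.mem_univ i))
  set s : ℝ := Real.sqrt (∑ i, v i ^ 2) with hs
  have hs0 : 0 < s := Real.sqrt_pos.mpr hc
  set u : Fin n → ℝ := s⁻¹ • v with hu
  have hunorm : ∑ i, u i ^ 2 = 1 := by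
    have hs2 : s ^ 2 = ∑ i, v i ^ 2 := Real.sq_sqrt hc.le
    have h3 : ∑ i, u i ^ 2 = s⁻¹ ^ 2 * ∑ i, v i ^ 2 := by
      simp [hu, Finset.mul_sum, mul_pow]
    rw [h3, ← hs2]
    field_simp
  have hQu : Q *ᵥ u = -u := by
    rw [hu, Matrix.mulVec_smul, hQv]
    ext i; simp
  have hQtu : Qᵀ *ᵥ u = -u := by
    have h1 : Qᵀ *ᵥ (Q *ᵥ u) = u := by
      rw [Matrix.mulVec_mulVec, hQ, Matrix.one_mulVec]
    rw [hQu] at h1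
    have h2 : Qᵀ *ᵥ (-u) = -(Qᵀ *ᵥ u) := by simp [Matrix.mulVec_neg]
    rw [h2] at h1
    exact neg_eq_iff_eq_neg.mp h1
  set P : Matrix (Fin n) (Fin n) ℝ := vecMulVec u u with hP
  have hPP : P * P = P := by
    ext i j
    simp only [hP, Matrix.mul_apply, Matrix.vecMulVec_apply]
    have h4 : ∑ k, u i * u k * (u k * u j) = (u i * u j) * ∑ k, u k ^2 := by
      rw [Finset.mul_sum]; congr 1; ext k; ring
    rw [h4, hunorm, mul_one]
  have hPT : Pᵀ = P := by
    ext i j; simp [hP, Matrix.vecMulVec_apply, mul_comm]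
  have key : ∀ M : Matrix (Fin n) (Fin n) ℝ, M *ᵥ u = -u → M * P = -P := by
    intro M hM
    ext i j
    simp only [hP, Matrix.mul_apply, Matrix.vecMulVec_apply, Matrix.neg_apply]
    have h5 : ∑ k, M i k * (u k * u j) = (M *ᵥ u) i * u j := by
      simp [Matrix.mulVec, dotProduct, Finset.sum_mul]; congr 1; ext k; ring
    rw [h5, hM]; simp
  have hQtP : Qᵀ * P = -P := key Qᵀ hQtu
  have hPQ : P * Q = -P := by
    have h1 := congrArg Matrix.transpose hQtP
    rw [Matrix.transpose_mul, Matrix.transpose_transpose, hPT, Matrix.transpose_neg, hPT] at h1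
    exact h1
  set Q' : Matrix (Fin n) (Fin n) ℝ := Q + (2:ℝ) • P with hQ'
  have horth : Q'ᵀ * Q' = 1 := by
    rw [hQ', Matrix.transpose_add, Matrix.add_mul, Matrix.mul_add, Matrix.mul_add]
    rw [hQ]
    simp only [Matrix.transpose_smul, hPT, Matrix.smul_mul, Matrix.mul_smul]
    rw [hQtP, hPQ, hPP]
    module
  have hfin := trace_orth_le' Q' horth
  have htrP : P.trace = 1 := by
    have h6 : P.trace = ∑ i, u i ^ 2 := by
      simp [hP, Matrix.trace, Matrix.diag, Matrix.vecMulVec_apply, sq]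
    rw [h6, hunorm]
  rw [hQ', Matrix.trace_add, Matrix.trace_smul, htrP] at hfin
  simp at hfin
  linarith

/-- With a symmetric `m`-coercive kernel `K` and orthogonal matrix fields
`A, B : V → O(n)` (`n ≥ 2`) satisfying `Σᵢ ⟨B i, (SA) i⟩_F ≥ Σᵢ ⟨A i, (SA) i⟩_F`, if the
determinant flips sign at some point `i₀`, then the Lyapunov functional
`Ẽ(A) = Σᵢ (n - ⟨A i, (SA) i⟩_F)` decreases by at least `4m`: `Ẽ(B) ≤ Ẽ(A) - 4m`. -/
theorem lyapunov_decrease_det_flip (V : Type*) [Fintype V] [Nonempty V]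
    (m : ℝ) (hm : 0 < m) (K : V → V → ℝ) (hsym : ∀ i j, K i j = K j i)
    (hcoer : ∀ f : V → ℝ, m * ∑ i, f i ^ 2 ≤ ∑ i, ∑ j, f i * K i j * f j)
    (n : ℕ) (hn : 2 ≤ n) (A B : V → Matrix (Fin n) (Fin n) ℝ)
    (hA : ∀ i, (A i)ᵀ * A i = 1) (hB : ∀ i, (B i)ᵀ * B i = 1)
    (h : ∑ i, Matrix.trace ((A i)ᵀ * ∑ j, K i j • A j) ≤
         ∑ i, Matrix.trace ((B i)ᵀ * ∑ j, K i j • A j))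
    (i₀ : V) (hflip : (B i₀).det * (A i₀).det < 0) :
    ∑ i, ((n : ℝ) - Matrix.trace ((B i)ᵀ * ∑ j, K i j • B j)) ≤
      (∑ i, ((n : ℝ) - Matrix.trace ((A i)ᵀ * ∑ j, K i j • A j))) - 4 * m := by
  classical
  set T : (V → Matrix (Fin n) (Fin n) ℝ) → (V → Matrix (Fin n) (Fin n) ℝ) → ℝ :=
    fun X Y => ∑ i, ∑ j, K i j * ((X i)ᵀ * Y j).trace with hT
  have hTr : ∀ X Y : V → Matrix (Fin n) (Fin n) ℝ,
      ∑ i, Matrix.trace ((X i)ᵀ * ∑ j, K i j • Y j) = T X Y := by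
    intro X Y
    refine Finset.sum_congr rfl fun i _ => ?_
    rw [Matrix.mul_sum, Matrix.trace_sum]
    refine Finset.sum_congr rfl fun j _ => ?_
    rw [Matrix.mul_smul, Matrix.trace_smul, smul_eq_mul]
  -- symmetry
  have htt : ∀ (X Y : Matrix (Fin n) (Fin n) ℝ), (Xᵀ * Y).trace = (Yᵀ * X).trace := by
    intro X Y
    rw [← Matrix.trace_transpose (Xᵀ * Y), Matrix.transpose_mul, Matrix.transpose_transpose]
  have hTsym : ∀ X Y, T X Y = T Y X := by
    intro X Y
    rw [hT]
    dsimp only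
    rw [Finset.sum_comm]
    refine Finset.sum_congr rfl fun i _ => Finset.sum_congr rfl fun j _ => ?_
    rw [hsym j i, htt]
  set D : V → Matrix (Fin n) (Fin n) ℝ := fun i => B i - A i with hD
  have hTDD : T D D = T B B - T B A - T A B + T A A := by
    rw [hT]
    dsimp only
    have hterm : ∀ i j, K i j * ((D i)ᵀ * D j).trace =
        K i j * ((B i)ᵀ * B j).trace - K i j * ((B i)ᵀ * A j).trace
          - K i j * ((A i)ᵀ * B j).trace + K i j * ((A i)ᵀ * A j).trace := by
      intro i j
      rw [hD]
      dsimp only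
      rw [Matrix.transpose_sub, Matrix.sub_mul, Matrix.mul_sub, Matrix.mul_sub,
        Matrix.trace_sub, Matrix.trace_sub, Matrix.trace_sub]
      ring
    calc ∑ i, ∑ j, K i j * ((D i)ᵀ * D j).trace
        = ∑ i, ∑ j, (K i j * ((B i)ᵀ * B j).trace - K i j * ((B i)ᵀ * A j).trace
          - K i j * ((A i)ᵀ * B j).trace + K i j * ((A i)ᵀ * A j).trace) := by
          refine Finset.sum_congr rfl fun i _ => Finset.sum_congr rfl fun j _ => hterm i j
      _ = _ := by
          simp only [Finset.sum_add_distrib, Finset.sum_sub_distrib]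
  -- coercivity
  have hcoS : m * (∑ i, ∑ p, ∑ q, (D i) q p ^ 2) ≤ T D D := by
    have htr2 : ∀ i j, ((D i)ᵀ * D j).trace = ∑ p, ∑ q, (D i) q p * (D j) q p := by
      intro i j
      simp [Matrix.trace, Matrix.diag, Matrix.mul_apply, Matrix.transpose_apply]
    have hTDD2 : T D D = ∑ p, ∑ q, ∑ i, ∑ j, (D i) q p * K i j * (D j) q p := by
      rw [hT]
      dsimp only
      calc ∑ i, ∑ j, K i j * ((D i)ᵀ * D j).trace
          = ∑ i, ∑ j, ∑ p, ∑ q, (D i) q p * K i j * (D j) q p := by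
            refine Finset.sum_congr rfl fun i _ => Finset.sum_congr rfl fun j _ => ?_
            rw [htr2, Finset.mul_sum]
            refine Finset.sum_congr rfl fun p _ => ?_
            rw [Finset.mul_sum]
            refine Finset.sum_congr rfl fun q _ => by ring
        _ = ∑ i, ∑ p, ∑ j, ∑ q, (D i) q p * K i j * (D j) q p :=
            Finset.sum_congr rfl fun i _ => Finset.sum_comm
        _ = ∑ p, ∑ i, ∑ j, ∑ q, (D i) q p * K i j * (D j) q p := Finset.sum_comm
        _ = ∑ p, ∑ i, ∑ q, ∑ j, (D i) q p * K i j * (D j) q p :=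
            Finset.sum_congr rfl fun p _ => Finset.sum_congr rfl fun i _ => Finset.sum_comm
        _ = ∑ p, ∑ q, ∑ i, ∑ j, (D i) q p * K i j * (D j) q p :=
            Finset.sum_congr rfl fun p _ => Finset.sum_comm
    rw [hTDD2]
    have hswap : ∑ i, ∑ p, ∑ q, (D i) q p ^ 2 = ∑ p, ∑ q, ∑ i, (D i) q p ^ 2 :=
      calc ∑ i, ∑ p, ∑ q, (D i) q p ^ 2
          = ∑ p, ∑ i, ∑ q, (D i) q p ^ 2 := Finset.sum_comm
        _ = ∑ p, ∑ q, ∑ i, (D i) q p ^ 2 :=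
            Finset.sum_congr rfl fun p _ => Finset.sum_comm
    rw [hswap, Finset.mul_sum]
    refine Finset.sum_le_sum fun p _ => ?_
    rw [Finset.mul_sum]
    refine Finset.sum_le_sum fun q _ => ?_
    exact hcoer (fun i => (D i) q p)
  -- h rephrased
  have h' : T A A ≤ T B A := by rw [← hTr, ← hTr]; exact h
  -- lower bound on the i₀ term
  have hi₀ : (4:ℝ) ≤ ∑ p, ∑ q, (D i₀) q p ^ 2 := by
    have hQorth : ((A i₀)ᵀ * B i₀)ᵀ * ((A i₀)ᵀ * B i₀) = 1 := by
      rw [Matrix.transpose_mul, Matrix.transpose_transpose, Matrix.mul_assoc]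
      rw [← Matrix.mul_assoc (A i₀), mul_eq_one_comm.mp (hA i₀), Matrix.one_mul, hB i₀]
    have hQdet : ((A i₀)ᵀ * B i₀).det < 0 := by
      rw [Matrix.det_mul, Matrix.det_transpose]
      nlinarith [hflip]
    have htrQ := trace_orth_det_neg' _ hQorth hQdet
    have hsum : ∑ p, ∑ q, (D i₀) q p ^ 2 = 2 * n - 2 * ((A i₀)ᵀ * B i₀).trace := by
      have e1 : ∑ p, ∑ q, (D i₀) q p ^ 2 = ((D i₀)ᵀ * D i₀).trace := by
        simp [Matrix.trace, Matrix.diag, Matrix.mul_apply, Matrix.transpose_apply, sq]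
      rw [e1, hD]
      dsimp only
      rw [Matrix.transpose_sub, Matrix.sub_mul, Matrix.mul_sub, Matrix.mul_sub,
        Matrix.trace_sub, Matrix.trace_sub, Matrix.trace_sub, hA i₀, hB i₀,
        Matrix.trace_one, htt (B i₀) (A i₀)]
      simp
      ring
    rw [hsum]
    linarith
  -- total squared norm ≥ 4
  have hS : (4:ℝ) ≤ ∑ i, ∑ p, ∑ q, (D i) q p ^ 2 := by
    refine le_trans hi₀ (Finset.single_le_sum (f := fun i => ∑ p, ∑ q, (D i) q p ^ 2)
      (fun i _ => ?_) (Finset.mem_univ i₀))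
    exact Finset.sum_nonneg fun p _ => Finset.sum_nonneg fun q _ => sq_nonneg _
  -- conclude
  have hBB : T A A + 4 * m ≤ T B B := by
    have h1 : T A B = T B A := hTsym A B
    have h2 : 4 * m ≤ m * ∑ i, ∑ p, ∑ q, (D i) q p ^ 2 := by nlinarith
    nlinarith [hcoS, h', hTDD]
  rw [Finset.sum_sub_distrib, Finset.sum_sub_distrib, hTr, hTr]
  linarith
end

section
/- Let n ≥ 2, let B be a real n×n orthogonal matrix with det(B) = −1, and let s : Fin n → ℝ satisfy s i ≥ 0 for all i and s antitone (s i ≥ s j whenever i ≤ j). Then Σ_{i=1}^n B_{ii} s_i ≤ (Σ_{i=1}^n s_i) − 2 s_n, where s_n is the last (smallest) entry of s; equivalently, ⟨B, diag(s)⟩_F ≤ Σ_{i=1}^{n−1} s_i − s_n. -/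
open Matrix Finset

/-- For an orthogonal real `n×n` matrix `B` (`n ≥ 2`) with `det B = -1` and
a nonnegative antitone sequence `s`, one has `Σᵢ Bᵢᵢ sᵢ ≤ (Σᵢ sᵢ) - 2 sₙ`, where `sₙ` is
the last (smallest) entry of `s`. -/
theorem diag_inner_le_of_det_neg_one (n : ℕ) (hn : 2 ≤ n)
    (B : Matrix (Fin n) (Fin n) ℝ) (hB : Bᵀ * B = 1) (hdet : B.det = -1)
    (s : Fin n → ℝ) (hs : ∀ i, 0 ≤ s i) (hmono : Antitone s) :
    ∑ i, B i i * s i ≤ (∑ i, s i) - 2 * s ⟨n - 1, by omega⟩ := by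
  -- diagonal entries are at most 1
  have hdiag : ∀ i, B i i ≤ 1 := by
    intro i
    have h1 : (Bᵀ * B) i i = 1 := by rw [hB]; simp
    have h2 : ∑ k, B k i ^ 2 = 1 := by
      simpa [Matrix.mul_apply, Matrix.transpose_apply, sq] using h1
    have h3 : B i i ^ 2 ≤ 1 := by
      rw [← h2]
      exact Finset.single_le_sum (f := fun k => B k i ^ 2) (fun k _ => sq_nonneg _)
        (Finset.mem_univ i)
    nlinarith [sq_nonneg (B i i - 1)]
  -- -1 is an eigenvalue
  have hdet0 : (1 + B).det = 0 := by
    have h1 : Bᵀ * (1 + B) = 1 + Bᵀ := by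
      rw [Matrix.mul_add, Matrix.mul_one, hB, add_comm]
    have h2 : (Bᵀ).det * (1 + B).det = (1 + Bᵀ).det := by
      rw [← Matrix.det_mul, h1]
    have h3 : (1 + Bᵀ).det = (1 + B).det := by
      rw [show (1 : Matrix (Fin n) (Fin n) ℝ) + Bᵀ = (1 + B)ᵀ by simp [Matrix.transpose_add],
        Matrix.det_transpose]
    rw [Matrix.det_transpose, hdet, h3] at h2
    linarith
  obtain ⟨v, hv0, hv⟩ := (Matrix.exists_mulVec_eq_zero_iff).mpr hdet0
  have hBv : B *ᵥ v = -v := by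
    have : v + B *ᵥ v = 0 := by
      have := hv
      rwa [Matrix.add_mulVec, Matrix.one_mulVec] at this
    linear_combination (norm := module) this
  -- normalize
  have hvsq : 0 < ∑ i, v i ^ 2 := by
    obtain ⟨i, hi⟩ := Function.ne_iff.mp hv0
    have : 0 < v i ^ 2 := lt_of_le_of_ne (sq_nonneg _) (Ne.symm (pow_ne_zero 2 hi))
    exact lt_of_lt_of_le this (Finset.single_le_sum (f := fun k => v k ^ 2)
      (fun k _ => sq_nonneg _) (Finset.mem_univ i))
  set r : ℝ := Real.sqrt (∑ i, v i ^ 2) with hr_def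
  have hr : 0 < r := Real.sqrt_pos.mpr hvsq
  set u : Fin n → ℝ := r⁻¹ • v with hu_def
  have husq : ∑ i, u i ^ 2 = 1 := by
    have : ∑ i, u i ^ 2 = r⁻¹ ^ 2 * ∑ i, v i ^ 2 := by
      rw [Finset.mul_sum]; apply Finset.sum_congr rfl; intro i _
      simp [hu_def]; ring
    rw [this, hr_def, inv_pow, Real.sq_sqrt hvsq.le, inv_mul_cancel₀ hvsq.ne']
  have hBu : B *ᵥ u = -u := by
    rw [hu_def, Matrix.mulVec_smul, hBv]; module
  have hBtu : Bᵀ *ᵥ u = -u := by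
    have h1 : Bᵀ *ᵥ (B *ᵥ u) = u := by
      rw [Matrix.mulVec_mulVec, hB, Matrix.one_mulVec]
    rw [hBu, Matrix.mulVec_neg] at h1
    exact neg_eq_iff_eq_neg.mp h1
  -- projection matrices
  set U : Matrix (Fin n) (Fin n) ℝ := Matrix.vecMulVec u u with hU_def
  have hUU : U * U = U := by
    ext i j
    simp only [Matrix.mul_apply, hU_def, Matrix.vecMulVec_apply]
    calc ∑ k, u i * u k * (u k * u j) = (u i * u j) * ∑ k, u k ^ 2 := by
          rw [Finset.mul_sum]; apply Finset.sum_congr rfl; intros; ring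
      _ = u i * u j := by rw [husq, mul_one]
  have hBU : B * U = -U := by
    ext i j
    simp only [Matrix.mul_apply, hU_def, Matrix.vecMulVec_apply, Matrix.neg_apply]
    calc ∑ k, B i k * (u k * u j) = (∑ k, B i k * u k) * u j := by
          rw [Finset.sum_mul]; apply Finset.sum_congr rfl; intros; ring
      _ = (B *ᵥ u) i * u j := rfl
      _ = -(u i * u j) := by rw [hBu]; simp
  have hUB : U * B = -U := by
    ext i j
    simp only [Matrix.mul_apply, hU_def, Matrix.vecMulVec_apply, Matrix.neg_apply]
    calc ∑ k, u i * u k * B k j = u i * (∑ k, Bᵀ j k * u k) := by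
          rw [Finset.mul_sum]; apply Finset.sum_congr rfl; intros
          simp [Matrix.transpose_apply]; ring
      _ = u i * (Bᵀ *ᵥ u) j := rfl
      _ = -(u i * u j) := by rw [hBtu]; simp
  set P : Matrix (Fin n) (Fin n) ℝ := 1 - U with hP_def
  have hPP : P * P = P := by
    rw [hP_def, Matrix.sub_mul, Matrix.mul_sub, Matrix.mul_sub, Matrix.one_mul,
      Matrix.mul_one, Matrix.one_mul, hUU]
    abel
  have hPBP : P * B * P = B + U := by
    have h1 : P * B = B + U := by
      rw [hP_def, Matrix.sub_mul, Matrix.one_mul, hUB]; abel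
    rw [h1, hP_def, Matrix.mul_sub, Matrix.mul_one, Matrix.add_mul, hBU, hUU]
    abel
  have hPsymm : ∀ i j, P i j = P j i := by
    intro i j
    rcases eq_or_ne i j with h | h
    · rw [h]
    · simp [hP_def, hU_def, Matrix.vecMulVec_apply, Matrix.one_apply, h, Ne.symm h, mul_comm]
  -- diagonal bound for P*B*P
  have hdiagPBP : ∀ i, (P * B * P) i i ≤ P i i := by
    intro i
    set w : Fin n → ℝ := fun k => P i k with hw_def
    have hkey : (P * B * P) i i = ∑ j, w j * (B *ᵥ w) j := by
      simp only [Matrix.mul_apply, Finset.sum_mul]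
      rw [Finset.sum_comm]
      apply Finset.sum_congr rfl; intro j _
      calc ∑ k, P i j * B j k * P k i = w j * ∑ k, B j k * w k := by
            rw [Finset.mul_sum]; apply Finset.sum_congr rfl; intro k _
            rw [hPsymm k i]; ring
        _ = w j * (B *ᵥ w) j := rfl
    have hiso : ∑ j, (B *ᵥ w) j ^ 2 = ∑ j, w j ^ 2 := by
      have h1 : (B *ᵥ w) ⬝ᵥ (B *ᵥ w) = w ⬝ᵥ w := by
        rw [Matrix.dotProduct_mulVec, ← Matrix.mulVec_transpose, Matrix.mulVec_mulVec,
          hB, Matrix.one_mulVec]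
      simpa [dotProduct, sq] using h1
    have hwP : ∑ j, w j ^ 2 = P i i := by
      have : (P * P) i i = ∑ j, w j ^ 2 := by
        simp only [Matrix.mul_apply, sq]
        apply Finset.sum_congr rfl; intro j _
        rw [hPsymm j i]
      rw [← this, hPP]
    have hCS := Finset.sum_mul_sq_le_sq_mul_sq Finset.univ w (fun j => (B *ᵥ w) j)
    rw [hiso] at hCS
    have hwnn : 0 ≤ ∑ j, w j ^ 2 := Finset.sum_nonneg fun j _ => sq_nonneg _
    rw [hkey, ← hwP]
    nlinarith [hCS, hwnn]
  -- trace bound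
  have htraceU : ∑ i, U i i = 1 := by
    simp only [hU_def, Matrix.vecMulVec_apply]
    rw [← husq]; apply Finset.sum_congr rfl; intros; ring
  have htraceP : ∑ i, P i i = (n : ℝ) - 1 := by
    simp only [hP_def, Matrix.sub_apply, Matrix.one_apply_eq]
    rw [Finset.sum_sub_distrib, htraceU]
    simp
  have htr : ∑ i, B i i ≤ (n : ℝ) - 2 := by
    have h1 : ∑ i, (B + U) i i ≤ ∑ i, P i i := by
      calc ∑ i, (B + U) i i = ∑ i, (P * B * P) i i := by rw [hPBP]
        _ ≤ ∑ i, P i i := Finset.sum_le_sum fun i _ => hdiagPBP i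
    simp only [Matrix.add_apply] at h1
    rw [Finset.sum_add_distrib, htraceU, htraceP] at h1
    linarith
  -- combine
  set last : Fin n := ⟨n - 1, by omega⟩ with hlast_def
  have hslast : ∀ i, s last ≤ s i := by
    intro i
    apply hmono
    rw [Fin.le_def]
    exact Nat.le_sub_one_of_lt i.isLt
  have hsum1 : 2 * s last ≤ ∑ i, (1 - B i i) * s i := by
    calc 2 * s last ≤ ((n : ℝ) - ∑ i, B i i) * s last := by
          nlinarith [hs last, htr]
      _ = ∑ i, (1 - B i i) * s last := by
          rw [← Finset.sum_mul, Finset.sum_sub_distrib]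
          simp
      _ ≤ ∑ i, (1 - B i i) * s i := by
          apply Finset.sum_le_sum; intro i _
          exact mul_le_mul_of_nonneg_left (hslast i) (by linarith [hdiag i])
  have : ∑ i, B i i * s i = (∑ i, s i) - ∑ i, (1 - B i i) * s i := by
    rw [← Finset.sum_sub_distrib]; apply Finset.sum_congr rfl; intros; ring
  rw [this]
  linarith
end
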